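/- arXiv:1511.07954 — 5 statements merged into one kernel-verified Lean document; each statement's English description precedes it below -/
import Mathlib

section
/- If p is a polynomial with complex coefficients satisfying p(1/r) = p(r)/r^{2m} for all nonzero r (a generalized self-reciprocal polynomial of reciprocal order 2m), then there exists a polynomial q such that p(r) = r^m · q((r + 1/r)/2) for all nonzero r. -/
/-!
Induction on `m`. If `p(1/r) = p(r)/r^(2m)` with `m ≥ 1`, then `p = c (1 + X^(2m)) + X p'` with
`c = p(0)` and `p'` of reciprocal order `2(m-1)`, while `r^m T_m((r + 1/r)/2) = (1 + r^(2m))/2`.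
For `m = 0` the identity `X^0 · reverse p = X^(deg p) · p` forces `p` to be constant.
-/

open Polynomial

namespace Polynomial

variable {K : Type*} [Field K]

theorem Chebyshev.T_eval_half_add_inv [NeZero (2 : K)] (n : ℕ) {r : K} (hr : r ≠ 0) :
    (T K n).eval ((r + r⁻¹) / 2) = (r ^ n + r⁻¹ ^ n) / 2 := by
  let _ := invertibleOfNonzero (two_ne_zero (α := K))
  have hcomp := dickson_one_one_eval_add_inv r r⁻¹ (mul_inv_cancel₀ hr) n
  rw [dickson_one_one_eq_chebyshev_T, eval_mul, eval_comp] at hcomp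
  simp only [eval_ofNat, eval_mul, eval_C, eval_X, invOf_eq_inv] at hcomp
  rw [← hcomp, div_eq_inv_mul (r + r⁻¹)]
  field_simp

theorem eval_reverse_of_ne_zero (p : K[X]) {r : K} (hr : r ≠ 0) :
    p.reverse.eval r = r ^ p.natDegree * p.eval r⁻¹ := by
  let _ := invertibleOfNonzero (inv_ne_zero hr)
  have h := eval₂_reverse_mul_pow (RingHom.id K) r⁻¹ p
  rw [invOf_eq_inv, inv_inv] at h
  rw [← eval₂_id, ← eval₂_id, ← h, mul_left_comm, ← mul_pow, mul_inv_cancel₀ hr, one_pow, mul_one]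

def IsSelfReciprocal (n : ℕ) (p : K[X]) : Prop :=
  ∀ r : K, r ≠ 0 → p.eval r⁻¹ = p.eval r / r ^ n

namespace IsSelfReciprocal

variable {n : ℕ} {p : K[X]}

theorem X_pow_mul_reverse [Infinite K] (h : IsSelfReciprocal n p) :
    X ^ n * p.reverse = X ^ p.natDegree * p := by
  refine eq_of_infinite_eval_eq _ _ ((Set.finite_singleton 0).infinite_compl.mono fun r hr => ?_)
  have hr : r ≠ 0 := hr
  simp only [Set.mem_ofPred_eq, eval_mul, eval_pow, eval_X, eval_reverse_of_ne_zero p hr, h r hr]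
  field_simp

theorem natDegree_le [Infinite K] (h : IsSelfReciprocal n p) : p.natDegree ≤ n := by
  rcases eq_or_ne p 0 with rfl | hp
  · simp
  have hdeg := congrArg natDegree h.X_pow_mul_reverse
  rw [natDegree_X_pow_mul _ hp] at hdeg
  have := (natDegree_mul_le (p := X ^ n)).trans_eq' hdeg
  have := p.reverse_natDegree_le
  have := natDegree_X_pow_le (R := K) n
  omega

theorem eq_C_eval_zero [Infinite K] (h : IsSelfReciprocal 0 p) : p = C (p.eval 0) := by
  rw [← coeff_zero_eq_eval_zero]
  exact eq_C_of_natDegree_le_zero h.natDegree_le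

theorem exists_eq_add_X_mul (h : IsSelfReciprocal (n + 2) p) :
    ∃ p', IsSelfReciprocal n p' ∧ p = C (p.eval 0) * (1 + X ^ (n + 2)) + X * p' := by
  obtain ⟨p', hp'⟩ : X ∣ p - C (p.eval 0) * (1 + X ^ (n + 2)) := by
    simp [X_dvd_iff, coeff_zero_eq_eval_zero]
  refine ⟨p', fun r hr => ?_, by linear_combination hp'⟩
  have hp'_r := congrArg (eval r) hp'
  have hp'_inv := congrArg (eval r⁻¹) hp'
  simp only [eval_sub, eval_mul, eval_C, eval_add, eval_one, eval_pow, eval_X] at hp'_r hp'_inv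
  rw [h r hr, eq_comm, inv_mul_eq_iff_eq_mul₀ hr] at hp'_inv
  rw [eq_div_iff (pow_ne_zero n hr), ← mul_right_inj' hr, ← hp'_r, hp'_inv, inv_pow]
  field_simp
  ring

theorem exists_eq_pow_mul_eval_chebyshev [Infinite K] [NeZero (2 : K)] {m : ℕ}
    (h : IsSelfReciprocal (2 * m) p) :
    ∃ q : K[X], ∀ r : K, r ≠ 0 → p.eval r = r ^ m * q.eval ((r + r⁻¹) / 2) := by
  induction m generalizing p with
  | zero =>
    refine ⟨C (p.eval 0), fun r _ => ?_⟩
    conv_lhs => rw [h.eq_C_eval_zero]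
    simp
  | succ m ih =>
    obtain ⟨p', hp', hp_eq⟩ := h.exists_eq_add_X_mul (n := 2 * m)
    generalize p.eval 0 = c at hp_eq
    subst hp_eq
    obtain ⟨q', hq'⟩ := ih hp'
    refine ⟨C (2 * c) * Chebyshev.T K ↑(m + 1) + q', fun r hr => ?_⟩
    simp only [eval_add, eval_mul, eval_C, eval_one, eval_pow, eval_X,
      Chebyshev.T_eval_half_add_inv _ hr, hq' r hr, inv_pow]
    field_simp
    ring

end IsSelfReciprocal

end Polynomial

theorem generalized_self_reciprocal_factor (p : Polynomial ℂ) (m : ℕ)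
    (hp : ∀ r : ℂ, r ≠ 0 → p.eval r⁻¹ = p.eval r / r ^ (2 * m)) :
    ∃ q : Polynomial ℂ, ∀ r : ℂ, r ≠ 0 →
      p.eval r = r ^ m * q.eval ((r + r⁻¹) / 2) :=
  IsSelfReciprocal.exists_eq_pow_mul_eval_chebyshev hp
end

section
/- If p is a polynomial with complex coefficients satisfying p(1/r) = -p(r)/r^{2m} for all nonzero r (a generalized anti-self-reciprocal polynomial of reciprocal order 2m), then there exists a polynomial q such that p(r) = r^m · ((r - 1/r)/2) · q((r + 1/r)/2) for all nonzero r. -/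
/-!
Write `p = ∑ cᵢ Xⁱ` and `y = (r + r⁻¹)/2`. Since `rᵏ - r⁻ᵏ = (r - r⁻¹) U_{k-1}(y)` for every
integer `k`, the polynomial `q = ∑ cᵢ U_{i-m-1}` satisfies
`r^m ((r - r⁻¹)/2) q(y) = ∑ cᵢ r^m (r^{i-m} - r^{m-i})/2 = (p(r) - r^{2m} p(r⁻¹))/2`
for any `p`, and anti-reciprocity turns the right-hand side into `p(r)`.
-/

namespace Polynomial

variable {K : Type*} [Field K]

theorem Chebyshev.half_sub_inv_mul_U_eval_half_add_inv (x : K) (n : ℤ) :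
    (x - x⁻¹) / 2 * (U K n).eval ((x + x⁻¹) / 2) = (x ^ (n + 1) - x ^ (-(n + 1))) / 2 := by
  rcases eq_or_ne (2 : K) 0 with h2 | h2
  · simp [h2]
  rcases eq_or_ne x 0 with rfl | hx
  · rw [zpow_neg]
    rcases eq_or_ne (n + 1) 0 with h | h <;> simp [h, zero_zpow]
  induction n using Chebyshev.induct with
  | zero => simp
  | one =>
    simp only [U_one, eval_mul, eval_ofNat, eval_X, zpow_add₀ hx, zpow_neg, zpow_one]
    field_simp
    ring
  | add_two n ih1 ih0 =>
    simp only [U_add_two, eval_sub, eval_mul, eval_ofNat, eval_X]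
    linear_combination (norm := skip) (x + x⁻¹) * ih1 - ih0
    simp only [zpow_add₀ hx, zpow_neg, zpow_one, zpow_natCast]
    field_simp
    ring
  | neg_add_one n ih0 ih1 =>
    simp only [U_sub_one, eval_sub, eval_mul, eval_ofNat, eval_X]
    linear_combination (norm := skip) (x + x⁻¹) * ih0 - ih1
    simp only [zpow_add₀ hx, zpow_sub₀ hx, zpow_neg, zpow_one, zpow_natCast]
    field_simp
    ring

noncomputable def antiReciprocalQuotient (p : K[X]) (m : ℕ) : K[X] :=
  ∑ i ∈ Finset.range (p.natDegree + 1), C (p.coeff i) * Chebyshev.U K ((i : ℤ) - m - 1)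

theorem eval_antiReciprocalQuotient (p : K[X]) (m : ℕ) {x : K} (hx : x ≠ 0) :
    x ^ m * ((x - x⁻¹) / 2) * (antiReciprocalQuotient p m).eval ((x + x⁻¹) / 2) =
      (p.eval x - x ^ (2 * m) * p.eval x⁻¹) / 2 := by
  rw [antiReciprocalQuotient, eval_finsetSum, Finset.mul_sum, eval_eq_sum_range,
    eval_eq_sum_range, Finset.mul_sum, ← Finset.sum_sub_distrib, Finset.sum_div]
  refine Finset.sum_congr rfl fun i _ => ?_
  rw [eval_mul, eval_C, mul_left_comm, mul_assoc, Chebyshev.half_sub_inv_mul_U_eval_half_add_inv,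
    sub_add_cancel, neg_sub, zpow_sub₀ hx, zpow_sub₀ hx, zpow_natCast, zpow_natCast, inv_pow]
  field_simp
  ring

end Polynomial

theorem generalized_anti_self_reciprocal_factor (p : Polynomial ℂ) (m : ℕ)
    (hp : ∀ r : ℂ, r ≠ 0 → p.eval r⁻¹ = -(p.eval r / r ^ (2 * m))) :
    ∃ q : Polynomial ℂ, ∀ r : ℂ, r ≠ 0 →
      p.eval r = r ^ m * ((r - r⁻¹) / 2) * q.eval ((r + r⁻¹) / 2) := by
  refine ⟨p.antiReciprocalQuotient m, fun r hr => ?_⟩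
  rw [Polynomial.eval_antiReciprocalQuotient p m hr, hp r hr]
  field_simp
  ring
end

section
/- Let N ≥ 2 and let 0 = β_0 < β_1 < ... < β_{N-1} < 2π be real numbers, with β_N := 2π and γ_j := (β_j + β_{j+1})/2 for j = 0,...,N-1. For indices i, j ∈ {1,...,N-1} with 2 ≤ j ≤ i-1 and θ ∈ [γ_{i-1}, γ_i], one has cos(θ - β_i) ≥ cos(θ - β_j), with equality if and only if j = i-1 and θ = γ_{i-1}. -/
/-!
Write `cos (θ - a) - cos (θ - b) = 2 sin ((a - b)/2) sin (θ - (a + b)/2)`.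
For `b = β j < a = β i` the first factor is positive, since `0 < β j < β i < 2π`;
on `[γ (i-1), γ i]` the angle `θ - (β i + β j)/2` lies in `[0, π)`, where the sine is
nonnegative and vanishes only at `0`. That happens only if `θ = (β i + β j)/2 ≥ γ (i-1)`,
which forces `j = i - 1`.
-/

open Real

namespace Real

theorem cos_sub_sub_cos_sub (θ a b : ℝ) :
    cos (θ - a) - cos (θ - b) = 2 * sin ((a - b) / 2) * sin (θ - (a + b) / 2) := by
  rw [cos_sub_cos, show (θ - a - (θ - b)) / 2 = -((a - b) / 2) by ring,
    show (θ - a + (θ - b)) / 2 = θ - (a + b) / 2 by ring, sin_neg]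
  ring

section

variable {a b θ : ℝ}

theorem sin_half_sub_pos (hba : b < a) (hab : a - b < 2 * π) : 0 < sin ((a - b) / 2) :=
  sin_pos_of_pos_of_lt_pi (by linarith) (by linarith)

theorem cos_sub_le_cos_sub (hba : b < a) (hab : a - b < 2 * π) (hθ₀ : (a + b) / 2 ≤ θ)
    (hθ₁ : θ ≤ (a + b) / 2 + π) : cos (θ - b) ≤ cos (θ - a) := by
  have hsin : 0 ≤ sin (θ - (a + b) / 2) :=
    sin_nonneg_of_nonneg_of_le_pi (by linarith) (by linarith)
  have := cos_sub_sub_cos_sub θ a b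
  nlinarith [sin_half_sub_pos hba hab]

theorem cos_sub_eq_cos_sub_iff (hba : b < a) (hab : a - b < 2 * π) (hθ₀ : (a + b) / 2 ≤ θ)
    (hθ₁ : θ < (a + b) / 2 + π) : cos (θ - a) = cos (θ - b) ↔ θ = (a + b) / 2 := by
  rw [← sub_eq_zero, cos_sub_sub_cos_sub, mul_eq_zero,
    or_iff_right (mul_ne_zero two_ne_zero (sin_half_sub_pos hba hab).ne'),
    sin_eq_zero_iff_of_lt_of_lt (by linarith [pi_pos]) (by linarith), sub_eq_zero]

end

end Real

theorem cos_angular_nearest_general (N : ℕ) (β : ℕ → ℝ)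
    (hβ0 : β 0 = 0) (hβN : β N = 2 * π)
    (hmono : ∀ k, k < N → β k < β (k + 1))
    (γ : ℕ → ℝ) (hγ : ∀ j, γ j = (β j + β (j + 1)) / 2)
    (i j : ℕ) (hi : i ≤ N - 1) (hj2 : 2 ≤ j) (hji : j ≤ i - 1)
    (θ : ℝ) (hθ : θ ∈ Set.Icc (γ (i - 1)) (γ i)) :
    Real.cos (θ - β i) ≥ Real.cos (θ - β j) ∧
      (Real.cos (θ - β i) = Real.cos (θ - β j) ↔ j = i - 1 ∧ θ = γ (i - 1)) := by
  have hβ : StrictMonoOn β (Set.Iic N) := strictMonoOn_Iic_of_lt_succ hmono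
  have hlt {k l : ℕ} (hkl : k < l) (hl : l ≤ N) : β k < β l :=
    hβ (Set.mem_Iic.2 (by omega)) (Set.mem_Iic.2 hl) hkl
  have hle_iff {k l : ℕ} (hk : k ≤ N) (hl : l ≤ N) : β k ≤ β l ↔ k ≤ l :=
    hβ.le_iff_le (Set.mem_Iic.2 hk) (Set.mem_Iic.2 hl)
  have hγ_pred : γ (i - 1) = (β (i - 1) + β i) / 2 := by rw [hγ, Nat.sub_add_cancel (by omega)]
  have hβj_pos : 0 < β j := hβ0 ▸ hlt (by omega) (by omega)
  have hβi_lt : β i < 2 * π := hβN ▸ hlt (by omega) le_rfl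
  have hβji : β j < β i := hlt (by omega) (by omega)
  have hβj_le : β j ≤ β (i - 1) := (hle_iff (by omega) (by omega)).2 hji
  have hβsucc : β (i + 1) ≤ 2 * π := hβN ▸ (hle_iff (by omega) le_rfl).2 (by omega)
  have hθ₀ : (β i + β j) / 2 ≤ θ := by linarith [hθ.1]
  have hθ₁ : θ < (β i + β j) / 2 + π := by linarith [hθ.2, hγ i]
  refine ⟨cos_sub_le_cos_sub hβji (by linarith) hθ₀ hθ₁.le, ?_⟩
  rw [cos_sub_eq_cos_sub_iff hβji (by linarith) hθ₀ hθ₁]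
  constructor
  · intro hθ_eq
    have hji' : j = i - 1 :=
      le_antisymm hji <| (hle_iff (by omega) (by omega)).1 (by linarith [hθ.1])
    exact ⟨hji', by rw [hθ_eq, hγ_pred, hji', add_comm]⟩
  · rintro ⟨rfl, hθ_eq⟩
    rw [hθ_eq, hγ_pred, add_comm]

theorem cos_angular_nearest (N : ℕ) (hN : 2 ≤ N) (β : ℕ → ℝ)
    (hβ0 : β 0 = 0) (hβN : β N = 2 * π)
    (hmono : ∀ k, k < N → β k < β (k + 1))
    (γ : ℕ → ℝ) (hγ : ∀ j, γ j = (β j + β (j + 1)) / 2)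
    (i j : ℕ) (hi : i ≤ N - 1) (hj1 : 1 ≤ j) (hj2 : 2 ≤ j) (hji : j ≤ i - 1)
    (θ : ℝ) (hθ : θ ∈ Set.Icc (γ (i - 1)) (γ i)) :
    Real.cos (θ - β i) ≥ Real.cos (θ - β j) ∧
      (Real.cos (θ - β i) = Real.cos (θ - β j) ↔ j = i - 1 ∧ θ = γ (i - 1)) :=
  cos_angular_nearest_general N β hβ0 hβN hmono γ hγ i j hi hj2 hji θ hθ
end

section
/- Let 0 = β_0 < β_1 < ... < β_{N-1} < 2π with β_N := 2π, γ_j := (β_j + β_{j+1})/2, and I_1 := [γ_0, γ_1]. If (u, θ) satisfies θ ∈ I_1 and u > max over all j of cos(θ - β_j), then u > min over all j ∈ {0,...,N-1} of cos((β_{j+1} - β_j)/2). -/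
/-!
The point `θ ∈ [γ₀, γ₁]` lies within half a gap of `β₁`: if `θ ≤ β₁` then
`|θ - β₁| ≤ (β₁ - β₀)/2`, otherwise `|θ - β₁| ≤ (β₂ - β₁)/2`. Every gap is at most `2π`, so both
half-gaps lie in `[0, π]`, where `cos` is antitone; hence `u > cos (θ - β₁)` exceeds the cosine
of one of these two half-gaps.
-/

open Real

lemma Real.cos_le_cos_of_abs_le_of_le_pi {x d : ℝ} (hx : |x| ≤ d) (hd : d ≤ π) :
    cos d ≤ cos x := by
  rw [← cos_abs x]
  exact cos_le_cos_of_nonneg_of_le_pi (abs_nonneg x) hd hx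

lemma cos_half_gap_le_cos_sub_of_mem_Icc {a p c θ : ℝ} (hap : p - a ≤ 2 * π)
    (hpc : c - p ≤ 2 * π) (hθ : θ ∈ Set.Icc ((a + p) / 2) ((p + c) / 2)) :
    cos ((p - a) / 2) ≤ cos (θ - p) ∨ cos ((c - p) / 2) ≤ cos (θ - p) := by
  obtain ⟨hθa, hθc⟩ := hθ
  rcases le_total θ p with hθp | hpθ
  · left
    exact cos_le_cos_of_abs_le_of_le_pi
      (by rw [abs_of_nonpos (sub_nonpos.2 hθp)]; linarith) (by linarith)
  · right
    exact cos_le_cos_of_abs_le_of_le_pi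
      (by rw [abs_of_nonneg (sub_nonneg.2 hpθ)]; linarith) (by linarith)

lemma succ_sub_self_le_sub_zero_of_lt_succ {β : ℕ → ℝ} {N j : ℕ} (hmono : ∀ k, k < N → β k < β (k + 1))
    (hj : j < N) : β (j + 1) - β j ≤ β N - β 0 := by
  have hβ : MonotoneOn β (Set.Iic N) :=
    (strictMonoOn_Iic_of_lt_succ fun m hm => by simpa using hmono m hm).monotoneOn
  have h0 : β 0 ≤ β j := hβ (Nat.zero_le N) hj.le (Nat.zero_le j)
  have hN : β (j + 1) ≤ β N := hβ (Set.mem_Iic.2 hj) (le_refl N) hj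
  linarith

theorem cos_gap_bound (N : ℕ) (hN : 2 ≤ N) (β : ℕ → ℝ)
    (hβ0 : β 0 = 0) (hβN : β N = 2 * π)
    (hmono : ∀ k, k < N → β k < β (k + 1))
    (γ : ℕ → ℝ) (hγ : ∀ j, γ j = (β j + β (j + 1)) / 2)
    (u θ : ℝ) (hθ : θ ∈ Set.Icc (γ 0) (γ 1))
    (hu : ∀ j, j < N → Real.cos (θ - β j) < u) :
    ∃ j, j < N ∧ Real.cos ((β (j + 1) - β j) / 2) < u := by
  have hgap : ∀ j, j < N → β (j + 1) - β j ≤ 2 * π := fun j hj => by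
    simpa [hβ0, hβN] using succ_sub_self_le_sub_zero_of_lt_succ hmono hj
  rw [hγ, hγ] at hθ
  rcases cos_half_gap_le_cos_sub_of_mem_Icc (hgap 0 (by omega)) (hgap 1 (by omega)) hθ with h | h
  · exact ⟨0, by omega, h.trans_lt (hu 1 (by omega))⟩
  · exact ⟨1, by omega, h.trans_lt (hu 1 (by omega))⟩
end

section
/- Let n ≥ 2, let 0 = α_0 ≤ α_1 ≤ ... ≤ α_{2n-1} < 2π be real numbers, and set A_j := (-1)^{n+1} · 2^{-(2n-1)} · (∏_{i ≠ j} sin((α_j - α_i)/2))^{-1} for distinct angles α_j. Then ∑_{j=0}^{2n-1} A_j = 0, ∑_{j=0}^{2n-1} A_j cos((n-1)α_j) = 0, and ∑_{j=0}^{2n-1} A_j sin((n-1)α_j) = 0. -/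
/-!
Put `z j = exp (i α j)`. Since `z j - z i = 2i sin ((α j - α i) / 2) exp (i (α j + α i) / 2)`,
the coefficient `A j` equals `c z j ^ (n - 1) / ∏ i ≠ j, (z j - z i)` with `c = i exp (i Σ α / 2)`
independent of `j`. For `2n` distinct nodes `z j` and `k ≤ 2n - 2`, the sum
`Σ j, z j ^ k / ∏ i ≠ j, (z j - z i)` is the coefficient of `X ^ (2n - 1)` in the Lagrange
interpolant of `X ^ k`, hence `0`. Taking `k = n - 1` gives `Σ A j = 0`, and `k = 2n - 2` gives
`Σ A j exp (i (n - 1) α j) = 0`, whose real and imaginary parts are the other two sums.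
-/

open Complex Finset

lemma Lagrange.sum_pow_div_prod_sub_eq_zero {F ι : Type*} [Field F] [DecidableEq ι]
    {s : Finset ι} {v : ι → F} (hvs : Set.InjOn v s) {k : ℕ} (hk : k + 1 < #s) :
    ∑ i ∈ s, v i ^ k / ∏ j ∈ s.erase i, (v i - v j) = 0 := by
  have hdeg : (Polynomial.X ^ k : Polynomial F).degree < #s := by
    rw [Polynomial.degree_X_pow]; exact_mod_cast k.lt_succ_self.trans hk
  simpa [Polynomial.coeff_X_pow, show #s - 1 ≠ k by omega] using
    (Lagrange.coeff_eq_sum hvs hdeg).symm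

lemma Complex.exp_mul_I_sub_exp_mul_I (a b : ℝ) :
    cexp (a * I) - cexp (b * I) = 2 * I * Real.sin ((a - b) / 2) * cexp ((a + b) / 2 * I) := by
  have ha : (a : ℂ) * I = (a - b) / 2 * I + (a + b) / 2 * I := by ring
  have hb : (b : ℂ) * I = -((a - b) / 2) * I + (a + b) / 2 * I := by ring
  rw [ha, hb, Complex.exp_add, Complex.exp_add, ofReal_sin, Complex.sin]
  push_cast
  ring_nf
  rw [I_sq]
  ring

lemma Complex.prod_exp_mul_I_sub_exp_mul_I {ι : Type*} (t : Finset ι) (β : ℝ) (α : ι → ℝ) :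
    ∏ i ∈ t, (cexp (β * I) - cexp (α i * I)) =
      (2 * I) ^ #t * cexp ((#t * β + ∑ i ∈ t, (α i : ℂ)) / 2 * I) *
        ∏ i ∈ t, (Real.sin ((β - α i) / 2) : ℂ) := by
  simp_rw [exp_mul_I_sub_exp_mul_I, prod_mul_distrib, prod_const, ← exp_sum]
  rw [← sum_mul, ← sum_div, sum_add_distrib, sum_const, nsmul_eq_mul, mul_pow]
  ring

lemma neg_one_pow_succ_div_two_pow (n : ℕ) (hn : 1 ≤ n) :
    (-1 : ℂ) ^ (n + 1) / 2 ^ (2 * n - 1) = I / (2 * I) ^ (2 * n - 1) := by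
  obtain ⟨k, rfl⟩ := Nat.exists_eq_add_of_le' hn
  rw [show 2 * (k + 1) - 1 = 2 * k + 1 by omega, mul_pow, pow_succ I, pow_mul, I_sq]
  field_simp
  ring_nf
  exact Even.neg_one_pow ⟨k, by ring⟩

lemma ofReal_neg_one_pow_div_mul_inv_prod_sin {ι : Type*} [Fintype ι] [DecidableEq ι]
    (n : ℕ) (hn : 1 ≤ n) (hι : Fintype.card ι = 2 * n) (α : ι → ℝ) (j : ι) :
    (((-1 : ℝ) ^ (n + 1) / 2 ^ (2 * n - 1) *
        (∏ i ∈ univ.erase j, Real.sin ((α j - α i) / 2))⁻¹ : ℝ) : ℂ) =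
      I * cexp ((∑ i, α i : ℂ) / 2 * I) * cexp (α j * I) ^ (n - 1) /
        ∏ i ∈ univ.erase j, (cexp (α j * I) - cexp (α i * I)) := by
  have hcard : #(univ.erase j) = 2 * n - 1 := by simp [hι]
  have hexp : cexp (((2 * n - 1 : ℕ) * α j + ∑ i ∈ univ.erase j, (α i : ℂ)) / 2 * I) =
      cexp ((∑ i, α i : ℂ) / 2 * I) * cexp (α j * I) ^ (n - 1) := by
    rw [← Complex.exp_nat_mul, ← Complex.exp_add, sum_erase_eq_sub (mem_univ j)]
    congr 1
    push_cast [Nat.cast_sub (by omega : 1 ≤ 2 * n), Nat.cast_sub hn]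
    ring
  rw [prod_exp_mul_I_sub_exp_mul_I, hcard, hexp]
  push_cast
  rw [neg_one_pow_succ_div_two_pow n hn]
  field_simp

open Real

theorem residue_sums_vanish (n : ℕ) (hn : 2 ≤ n) (α : Fin (2 * n) → ℝ)
    (hα0 : α ⟨0, by omega⟩ = 0) (hαlt : ∀ j, α j < 2 * π)
    (hmono : StrictMono α)
    (A : Fin (2 * n) → ℝ)
    (hA : ∀ j, A j = (-1 : ℝ) ^ (n + 1) / 2 ^ (2 * n - 1) *
      (∏ i ∈ Finset.univ.erase j, Real.sin ((α j - α i) / 2))⁻¹) :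
    (∑ j, A j) = 0 ∧
      (∑ j, A j * Real.cos (((n : ℝ) - 1) * α j)) = 0 ∧
      (∑ j, A j * Real.sin (((n : ℝ) - 1) * α j)) = 0 := by
  set z : Fin (2 * n) → ℂ := fun j => cexp (α j * I)
  set c : ℂ := I * cexp ((∑ i, α i : ℂ) / 2 * I)
  have hαmem : ∀ j, α j ∈ Set.Ico 0 (2 * π) := fun j =>
    ⟨hα0 ▸ hmono.monotone (Fin.mk_le_of_le_val (Nat.zero_le _)), hαlt j⟩
  have hz : Function.Injective z := fun i j hij =>
    hmono.injective <| Circle.exp_injOn_Ico (by simp) (hαmem i) (hαmem j) <|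
      Subtype.ext <| by simpa only [Circle.coe_exp] using hij
  have hA' : ∀ j, (A j : ℂ) = c * (z j ^ (n - 1) / ∏ i ∈ univ.erase j, (z j - z i)) := fun j => by
    rw [hA j, ofReal_neg_one_pow_div_mul_inv_prod_sin n (by omega) (Fintype.card_fin _),
      mul_div_assoc]
  have hpow : ∀ j, cexp ((((n : ℝ) - 1) * α j : ℝ) * I) = z j ^ (n - 1) := fun j => by
    rw [← Complex.exp_nat_mul]
    push_cast [Nat.cast_sub (by omega : 1 ≤ n)]
    ring_nf
  have hcard : #(univ : Finset (Fin (2 * n))) = 2 * n := by simp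
  have hsum : ∑ j, (A j : ℂ) = 0 := by
    simp_rw [hA', ← mul_sum]
    rw [Lagrange.sum_pow_div_prod_sub_eq_zero hz.injOn (by omega), mul_zero]
  have hsum_exp : ∑ j, (A j : ℂ) * cexp ((((n : ℝ) - 1) * α j : ℝ) * I) = 0 := by
    have hsq : ∀ j, z j ^ (n - 1) * z j ^ (n - 1) = z j ^ (2 * n - 2) := fun j => by
      rw [← pow_add]; congr 1; omega
    simp_rw [hpow, hA', mul_assoc, div_mul_eq_mul_div, hsq, ← mul_sum]
    rw [Lagrange.sum_pow_div_prod_sub_eq_zero hz.injOn (by omega), mul_zero]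
  refine ⟨by exact_mod_cast hsum, ?_, ?_⟩
  · simpa only [re_sum, re_ofReal_mul, exp_ofReal_mul_I_re, zero_re] using congrArg re hsum_exp
  · simpa only [im_sum, im_ofReal_mul, exp_ofReal_mul_I_im, zero_im] using congrArg im hsum_exp
end
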